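/- arXiv:2505.03155 — 2 statements merged into one kernel-verified Lean document; each statement's English description precedes it below -/
import Mathlib

section
/- Let X ∈ ℝ^{K×d} be a feature matrix and r ∈ ℝ^K a reward vector. For every θ ∈ ℝ^d, the Hessian S(θ) ∈ ℝ^{d×d} of the map θ ↦ ⟨π_θ, r⟩ satisfies the non-uniform smoothness bound: for all y ∈ ℝ^d, |y^⊤ S(θ) y| ≤ 3 λ_max(X^⊤X) ‖(diag(π̄_z) − π̄_z π̄_z^⊤) r‖₂ ‖y‖₂², where z = Xθ and π̄_z = softmax(z). -/
open scoped BigOperators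
open Finset Matrix

/-- Largest eigenvalue of `XᵀX`. -/
noncomputable def lamMax {K d : ℕ} (X : Matrix (Fin K) (Fin d) ℝ) : ℝ :=
  ⨆ i, (show (Matrix.transpose X * X).IsHermitian by
    simpa [Matrix.conjTranspose_eq_transpose_of_trivial] using
      Matrix.isHermitian_conjTranspose_mul_self X).eigenvalues i

namespace NUS

lemma hasDerivAt_sum_exp {K : ℕ} (z u c : Fin K → ℝ) (t : ℝ) :
    HasDerivAt (fun s => ∑ a, c a * Real.exp (z a + s * u a))
      (∑ a, c a * u a * Real.exp (z a + t * u a)) t := by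
  refine HasDerivAt.fun_sum (F := ℝ) fun a _ => ?_
  have h1 : HasDerivAt (fun s : ℝ => z a + s * u a) (u a) t := by
    simpa using (hasDerivAt_mul_const (u a)).const_add (z a)
  have := h1.exp.const_mul (c a)
  exact this.congr_deriv (by ring)


lemma deriv2 {K : ℕ} (hK : K ≠ 0) (z u r : Fin K → ℝ) :
    deriv (deriv (fun t : ℝ =>
        (∑ a, r a * Real.exp (z a + t * u a)) / (∑ a, Real.exp (z a + t * u a)))) 0
      = (∑ a, (Real.exp (z a) / ∑ b, Real.exp (z b)) *
            (r a - ∑ b, (Real.exp (z b) / ∑ b', Real.exp (z b')) * r b) * u a ^ 2)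
        - 2 * (∑ a, (Real.exp (z a) / ∑ b, Real.exp (z b)) * u a)
            * (∑ a, (Real.exp (z a) / ∑ b, Real.exp (z b)) *
                (r a - ∑ b, (Real.exp (z b) / ∑ b', Real.exp (z b')) * r b) * u a) := by
  haveI : Nonempty (Fin K) := Fin.pos_iff_nonempty.mp (Nat.pos_of_ne_zero hK)
  have hNpos : ∀ t : ℝ, 0 < ∑ a, Real.exp (z a + t * u a) := fun t =>
    Finset.sum_pos (fun a _ => Real.exp_pos _) univ_nonempty
  have hN : ∀ t : ℝ, HasDerivAt (fun s => ∑ a, Real.exp (z a + s * u a))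
      (∑ a, u a * Real.exp (z a + t * u a)) t := fun t => by
    have := hasDerivAt_sum_exp z u (fun _ => 1) t
    simpa using this
  have hA : ∀ t : ℝ, HasDerivAt (fun s => ∑ a, r a * Real.exp (z a + s * u a))
      (∑ a, r a * u a * Real.exp (z a + t * u a)) t := fun t => hasDerivAt_sum_exp z u r t
  have hN1 : ∀ t : ℝ, HasDerivAt (fun s => ∑ a, u a * Real.exp (z a + s * u a))
      (∑ a, u a * u a * Real.exp (z a + t * u a)) t := fun t => hasDerivAt_sum_exp z u u t
  have hA1 : ∀ t : ℝ, HasDerivAt (fun s => ∑ a, r a * u a * Real.exp (z a + s * u a))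
      (∑ a, r a * u a * u a * Real.exp (z a + t * u a)) t := fun t => by
    have := hasDerivAt_sum_exp z u (fun a => r a * u a) t
    simpa using this
  have hψ : deriv (fun t : ℝ =>
        (∑ a, r a * Real.exp (z a + t * u a)) / (∑ a, Real.exp (z a + t * u a)))
      = fun t => ((∑ a, r a * u a * Real.exp (z a + t * u a)) * (∑ a, Real.exp (z a + t * u a))
          - (∑ a, r a * Real.exp (z a + t * u a)) * (∑ a, u a * Real.exp (z a + t * u a)))
            / (∑ a, Real.exp (z a + t * u a))^2 := by
    funext t
    exact ((hA t).div (hN t) (hNpos t).ne').deriv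
  rw [hψ]
  have hnum : HasDerivAt (fun t : ℝ =>
      (∑ a, r a * u a * Real.exp (z a + t * u a)) * (∑ a, Real.exp (z a + t * u a))
        - (∑ a, r a * Real.exp (z a + t * u a)) * (∑ a, u a * Real.exp (z a + t * u a)))
      ((∑ a, r a * u a * u a * Real.exp (z a + 0 * u a)) * (∑ a, Real.exp (z a + 0 * u a))
        + (∑ a, r a * u a * Real.exp (z a + 0 * u a)) * (∑ a, u a * Real.exp (z a + 0 * u a))
        - ((∑ a, r a * u a * Real.exp (z a + 0 * u a)) * (∑ a, u a * Real.exp (z a + 0 * u a))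
          + (∑ a, r a * Real.exp (z a + 0 * u a)) * (∑ a, u a * u a * Real.exp (z a + 0 * u a)))) 0 :=
    ((hA1 0).mul (hN 0)).sub ((hA 0).mul (hN1 0))
  have hden : HasDerivAt (fun t : ℝ => (∑ a, Real.exp (z a + t * u a))^2)
      (2 * (∑ a, Real.exp (z a + 0 * u a)) ^ 1 * (∑ a, u a * Real.exp (z a + 0 * u a))) 0 :=
    (hN 0).pow 2
  rw [(hnum.fun_div hden (pow_ne_zero 2 (hNpos 0).ne')).deriv]
  simp only [zero_mul, add_zero, pow_one]
  have hn0 : (∑ a, Real.exp (z a)) ≠ 0 := by positivity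
  have hS1 : (∑ a, (Real.exp (z a) / ∑ b, Real.exp (z b)) *
        (r a - ∑ b, (Real.exp (z b) / ∑ b', Real.exp (z b')) * r b) * u a ^ 2)
      = ((∑ a, r a * u a * u a * Real.exp (z a)) * (∑ a, Real.exp (z a))
          - (∑ a, u a * u a * Real.exp (z a)) * (∑ a, r a * Real.exp (z a)))
        / (∑ a, Real.exp (z a))^2 := by
    have hc : (∑ b, (Real.exp (z b) / ∑ b', Real.exp (z b')) * r b)
        = (∑ a, r a * Real.exp (z a)) / (∑ a, Real.exp (z a)) := by
      rw [Finset.sum_div]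
      exact Finset.sum_congr rfl fun b _ => by ring
    rw [hc, eq_div_iff (pow_ne_zero 2 hn0), Finset.sum_mul, Finset.sum_mul, Finset.sum_mul,
      ← Finset.sum_sub_distrib]
    refine Finset.sum_congr rfl fun a _ => ?_
    field_simp
  have hS2 : (∑ a, (Real.exp (z a) / ∑ b, Real.exp (z b)) * u a)
      = (∑ a, u a * Real.exp (z a)) / (∑ a, Real.exp (z a)) := by
    rw [Finset.sum_div]
    exact Finset.sum_congr rfl fun a _ => by ring
  have hS3 : (∑ a, (Real.exp (z a) / ∑ b, Real.exp (z b)) *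
        (r a - ∑ b, (Real.exp (z b) / ∑ b', Real.exp (z b')) * r b) * u a)
      = ((∑ a, r a * u a * Real.exp (z a)) * (∑ a, Real.exp (z a))
          - (∑ a, u a * Real.exp (z a)) * (∑ a, r a * Real.exp (z a)))
        / (∑ a, Real.exp (z a))^2 := by
    have hc : (∑ b, (Real.exp (z b) / ∑ b', Real.exp (z b')) * r b)
        = (∑ a, r a * Real.exp (z a)) / (∑ a, Real.exp (z a)) := by
      rw [Finset.sum_div]
      exact Finset.sum_congr rfl fun b _ => by ring
    rw [hc, eq_div_iff (pow_ne_zero 2 hn0), Finset.sum_mul, Finset.sum_mul, Finset.sum_mul,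
      ← Finset.sum_sub_distrib]
    refine Finset.sum_congr rfl fun a _ => ?_
    field_simp
  rw [hS1, hS2, hS3]
  field_simp
  ring


lemma abs_le_of_sq {x b : ℝ} (h : x ^ 2 ≤ b ^ 2) (hb : 0 ≤ b) : |x| ≤ b :=
  abs_le.mpr (abs_le_of_sq_le_sq' h hb)

lemma key {K : ℕ} (p v u : Fin K → ℝ) (hp0 : ∀ a, 0 ≤ p a) (hp1 : (∑ a, p a) = 1) :
    |(∑ a, v a * u a ^ 2) - 2 * (∑ a, p a * u a) * (∑ a, v a * u a)|
      ≤ 3 * Real.sqrt (∑ a, v a ^ 2) * (∑ a, u a ^ 2) := by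
  set V := Real.sqrt (∑ a, v a ^ 2) with hV
  set U := ∑ a, u a ^ 2 with hU
  have hU0 : 0 ≤ U := Finset.sum_nonneg fun a _ => sq_nonneg _
  have hV0 : 0 ≤ V := Real.sqrt_nonneg _
  have hVsq : V ^ 2 = ∑ a, v a ^ 2 := Real.sq_sqrt (Finset.sum_nonneg fun a _ => sq_nonneg _)
  have h1 : |∑ a, v a * u a ^ 2| ≤ V * U := by
    have cs := Finset.sum_mul_sq_le_sq_mul_sq Finset.univ v (fun a => u a ^ 2)
    have h4 : (∑ a, (u a ^ 2) ^ 2) ≤ U ^ 2 := by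
      rw [hU, sq, Finset.sum_mul]
      refine Finset.sum_le_sum fun a _ => ?_
      have h5 : u a ^ 2 ≤ ∑ b, u b ^ 2 :=
        Finset.single_le_sum (fun b _ => sq_nonneg (u b)) (Finset.mem_univ a)
      nlinarith [sq_nonneg (u a)]
    refine abs_le_of_sq ?_ (mul_nonneg hV0 hU0)
    calc (∑ a, v a * u a ^ 2) ^ 2 ≤ (∑ a, v a ^ 2) * ∑ a, (u a ^ 2) ^ 2 := cs
      _ ≤ V ^ 2 * U ^ 2 := by
          rw [hVsq]
          exact mul_le_mul_of_nonneg_left h4 (Finset.sum_nonneg fun a _ => sq_nonneg _)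
      _ = (V * U) ^ 2 := by ring
  have h2 : (∑ a, p a * u a) ^ 2 ≤ U := by
    have cs := Finset.sum_mul_sq_le_sq_mul_sq Finset.univ p u
    have hpsq : (∑ a, p a ^ 2) ≤ 1 := by
      calc (∑ a, p a ^ 2) ≤ ∑ a, p a * 1 := by
            refine Finset.sum_le_sum fun a _ => ?_
            have : p a ≤ 1 := by
              rw [← hp1]
              exact Finset.single_le_sum (fun b _ => hp0 b) (Finset.mem_univ a)
            nlinarith [hp0 a]
        _ = 1 := by simp [hp1]
    calc (∑ a, p a * u a) ^ 2 ≤ (∑ a, p a ^ 2) * U := cs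
      _ ≤ 1 * U := mul_le_mul_of_nonneg_right hpsq hU0
      _ = U := one_mul U
  have h3 : (∑ a, v a * u a) ^ 2 ≤ V ^ 2 * U := by
    rw [hVsq]
    exact Finset.sum_mul_sq_le_sq_mul_sq Finset.univ v u
  have hsU : Real.sqrt U ^ 2 = U := Real.sq_sqrt hU0
  have ha : |∑ a, p a * u a| ≤ Real.sqrt U :=
    abs_le_of_sq (by rw [hsU]; exact h2) (Real.sqrt_nonneg U)
  have hb : |∑ a, v a * u a| ≤ V * Real.sqrt U :=
    abs_le_of_sq (by rw [mul_pow, hsU]; exact h3)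
      (mul_nonneg hV0 (Real.sqrt_nonneg U))
  have h23 : |∑ a, p a * u a| * |∑ a, v a * u a| ≤ V * U := by
    calc |∑ a, p a * u a| * |∑ a, v a * u a| ≤ Real.sqrt U * (V * Real.sqrt U) :=
          mul_le_mul ha hb (abs_nonneg _) (Real.sqrt_nonneg U)
      _ = V * (Real.sqrt U ^ 2) := by ring
      _ = V * U := by rw [hsU]
  have habs : |(∑ a, v a * u a ^ 2) - 2 * (∑ a, p a * u a) * (∑ a, v a * u a)|
      ≤ |∑ a, v a * u a ^ 2| + 2 * |∑ a, p a * u a| * |∑ a, v a * u a| := by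
    calc |(∑ a, v a * u a ^ 2) - 2 * (∑ a, p a * u a) * (∑ a, v a * u a)|
        ≤ |∑ a, v a * u a ^ 2| + |2 * (∑ a, p a * u a) * (∑ a, v a * u a)| := abs_sub _ _
      _ = |∑ a, v a * u a ^ 2| + 2 * |∑ a, p a * u a| * |∑ a, v a * u a| := by
          rw [abs_mul, abs_mul, abs_two]
  calc |(∑ a, v a * u a ^ 2) - 2 * (∑ a, p a * u a) * (∑ a, v a * u a)|
      ≤ |∑ a, v a * u a ^ 2| + 2 * |∑ a, p a * u a| * |∑ a, v a * u a| := habs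
    _ ≤ V * U + 2 * (V * U) := by
        have h2' := mul_le_mul_of_nonneg_left h23 (by norm_num : (0:ℝ) ≤ 2)
        rw [mul_assoc]
        linarith
    _ = 3 * V * U := by ring


lemma rayleigh {K d : ℕ} (X : Matrix (Fin K) (Fin d) ℝ) (y : EuclideanSpace ℝ (Fin d)) :
    (∑ a, (∑ j, X a j * y j) ^ 2) ≤ lamMax X * ‖y‖ ^ 2 := by
  rcases eq_or_ne d 0 with hd | hd
  · subst hd
    have hy : y = 0 := Subsingleton.elim y 0
    simp [hy]
  haveI : Nonempty (Fin d) := Fin.pos_iff_nonempty.mp (Nat.pos_of_ne_zero hd)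
  have hM : (Matrix.transpose X * X).IsHermitian := by
    simpa [Matrix.conjTranspose_eq_transpose_of_trivial] using
      Matrix.isHermitian_conjTranspose_mul_self X
  set B := hM.eigenvectorBasis with hB
  set lam := hM.eigenvalues with hlam
  set c : Fin d → ℝ := fun i => inner ℝ (B i) y with hc
  have F1 : (∑ i, c i • B i) = y := by
    have := B.sum_repr y
    simpa [hc, B.repr_apply_apply] using this
  have F2 : ‖y‖ ^ 2 = ∑ i, c i ^ 2 := by
    have := B.sum_inner_mul_inner y y
    rw [← real_inner_self_eq_norm_sq, ← this]
    refine Finset.sum_congr rfl fun i _ => ?_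
    rw [hc, real_inner_comm (B i) y, sq]
  have heig : ∀ i, Matrix.toEuclideanLin (Xᴴ * X) (B i) = lam i • B i := fun i => by
    rw [Matrix.toEuclideanLin_apply, Matrix.conjTranspose_eq_transpose_of_trivial,
      hM.mulVec_eigenvectorBasis]
    rfl
  have G1 : (∑ a, (∑ j, X a j * y j) ^ 2) = inner ℝ y (Matrix.toEuclideanLin (Xᴴ * X) y) := by
    rw [Matrix.toEuclideanLin_apply, PiLp.inner_apply]
    simp only [RCLike.inner_apply, conj_trivial]
    have h1 : (Xᴴ * X) *ᵥ (WithLp.ofLp y)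
        = Xᴴ *ᵥ (X *ᵥ (WithLp.ofLp y)) := by
      rw [← Matrix.mulVec_mulVec]
    rw [h1]
    have h2 : (∑ i, (Xᴴ *ᵥ (X *ᵥ (WithLp.ofLp y))) i * (y i : ℝ))
        = dotProduct (WithLp.ofLp y)
            (Xᴴ *ᵥ (X *ᵥ (WithLp.ofLp y))) :=
      Finset.sum_congr rfl fun i _ => mul_comm _ _
    rw [h2, Matrix.conjTranspose_eq_transpose_of_trivial, Matrix.dotProduct_mulVec,
      Matrix.vecMul_transpose]
    simp only [dotProduct, Matrix.mulVec]
    exact Finset.sum_congr rfl fun a _ => by rw [sq]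
  have hTy : Matrix.toEuclideanLin (Xᴴ * X) y = ∑ i, c i • lam i • B i := by
    conv_lhs => rw [← F1]
    rw [map_sum]
    exact Finset.sum_congr rfl fun i _ => by rw [_root_.map_smul, heig i]
  have G2 : (inner ℝ y (Matrix.toEuclideanLin (Xᴴ * X) y) : ℝ) = ∑ i, lam i * c i ^ 2 := by
    rw [hTy, inner_sum]
    refine Finset.sum_congr rfl fun i _ => ?_
    rw [real_inner_smul_right, real_inner_smul_right]
    have h3 : (inner ℝ y (B i) : ℝ) = c i := by rw [real_inner_comm]
    rw [h3]
    ring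
  have hle : ∀ i, lam i ≤ lamMax X := fun i =>
    le_ciSup (Set.Finite.bddAbove (Set.finite_range lam)) i
  calc (∑ a, (∑ j, X a j * y j) ^ 2) = ∑ i, lam i * c i ^ 2 := by rw [G1, G2]
    _ ≤ ∑ i, lamMax X * c i ^ 2 :=
        Finset.sum_le_sum fun i _ => mul_le_mul_of_nonneg_right (hle i) (sq_nonneg _)
    _ = lamMax X * ‖y‖ ^ 2 := by rw [← Finset.mul_sum, F2]


end NUS

/-- Non-uniform smoothness: the Hessian `S(θ)` of `θ ↦ ⟨π_θ, r⟩` satisfies, for all `y`,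
`|yᵀ S(θ) y| ≤ 3 λ_max(XᵀX) ‖(diag(π̄_z) − π̄_z π̄_zᵀ) r‖₂ ‖y‖₂²` where `z = Xθ`,
`π̄_z = softmax(z)`. -/
theorem non_uniform_smoothness_log_linear {K d : ℕ}
    (X : Matrix (Fin K) (Fin d) ℝ) (r : Fin K → ℝ)
    (θ y : EuclideanSpace ℝ (Fin d)) :
    let f : EuclideanSpace ℝ (Fin d) → ℝ := fun θ' =>
      ∑ a, (Real.exp (∑ j, X a j * θ' j) / ∑ b, Real.exp (∑ j, X b j * θ' j)) * r a
    let pz : Fin K → ℝ := fun a =>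
      Real.exp (∑ j, X a j * θ j) / ∑ b, Real.exp (∑ j, X b j * θ j)
    |fderiv ℝ (fderiv ℝ f) θ y y| ≤
      3 * lamMax X * Real.sqrt (∑ a, (pz a * (r a - ∑ b, pz b * r b)) ^ 2) * ‖y‖ ^ 2 := by
  intro f pz
  have hfbody : f = fun θ' =>
      ∑ a, (Real.exp (∑ j, X a j * θ' j) / ∑ b, Real.exp (∑ j, X b j * θ' j)) * r a := rfl
  have hpz : pz = fun a =>
      Real.exp (∑ j, X a j * θ j) / ∑ b, Real.exp (∑ j, X b j * θ j) := rfl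
  simp only [hpz]
  rcases eq_or_ne K 0 with hK | hK
  · subst hK
    have hf0 : f = fun _ => (0 : ℝ) := by
      rw [hfbody]; funext θ'; simp
    rw [hf0]
    have h1 : fderiv ℝ (fun _ : EuclideanSpace ℝ (Fin d) => (0:ℝ)) =
        fun _ => (0 : EuclideanSpace ℝ (Fin d) →L[ℝ] ℝ) := by
      funext x; exact fderiv_const_apply 0
    rw [h1]
    have h2 : fderiv ℝ (fun _ : EuclideanSpace ℝ (Fin d) =>
        (0 : EuclideanSpace ℝ (Fin d) →L[ℝ] ℝ)) θ = 0 := fderiv_const_apply 0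
    rw [h2]
    simp
  -- main case
  haveI : Nonempty (Fin K) := Fin.pos_iff_nonempty.mp (Nat.pos_of_ne_zero hK)
  have hcoordCD : ∀ j : Fin d, ContDiff ℝ 2 (fun θ' : EuclideanSpace ℝ (Fin d) => θ' j) :=
    fun j => (EuclideanSpace.proj (𝕜 := ℝ) j).contDiff
  have hS : ∀ a : Fin K, ContDiff ℝ 2 (fun θ' : EuclideanSpace ℝ (Fin d) => ∑ j, X a j * θ' j) :=
    fun a => ContDiff.sum fun j _ => contDiff_const.mul (hcoordCD j)
  have hN : ContDiff ℝ 2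
      (fun θ' : EuclideanSpace ℝ (Fin d) => ∑ b, Real.exp (∑ j, X b j * θ' j)) :=
    ContDiff.sum fun b _ => Real.contDiff_exp.comp (hS b)
  have hNpos : ∀ θ' : EuclideanSpace ℝ (Fin d), 0 < ∑ b, Real.exp (∑ j, X b j * θ' j) :=
    fun θ' => Finset.sum_pos (fun b _ => Real.exp_pos _) univ_nonempty
  have hfCD : ContDiff ℝ 2 f := by
    rw [hfbody]
    exact ContDiff.sum fun a _ =>
      ((Real.contDiff_exp.comp (hS a)).div hN fun θ' => (hNpos θ').ne').mul contDiff_const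
  have hdf : Differentiable ℝ f := hfCD.differentiable two_ne_zero
  have hdf1 : Differentiable ℝ (fderiv ℝ f) :=
    (hfCD.fderiv_right (m := 1) (by norm_num)).differentiable one_ne_zero
  have hA : fderiv ℝ (fun θ' => fderiv ℝ f θ' y) θ y = fderiv ℝ (fderiv ℝ f) θ y y := by
    rw [fderiv_clm_apply (hdf1 θ) (differentiableAt_const y)]
    simp
  have hline : ∀ t : ℝ, HasDerivAt (fun s : ℝ => θ + s • y) y t := fun t => by
    simpa using ((hasDerivAt_id t).smul_const y).const_add θ
  have hphi : ∀ t : ℝ, HasDerivAt (fun s => f (θ + s • y)) (fderiv ℝ f (θ + t • y) y) t :=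
    fun t => by
      have := ((hdf (θ + t • y)).hasFDerivAt).comp_hasDerivAt t (hline t)
      exact this
  have hderivφ : deriv (fun s => f (θ + s • y)) = fun t => fderiv ℝ f (θ + t • y) y :=
    funext fun t => (hphi t).deriv
  have hg : DifferentiableAt ℝ (fun θ' => fderiv ℝ f θ' y) θ :=
    (hdf1 θ).clm_apply (differentiableAt_const y)
  have hg' : HasFDerivAt (fun θ' => fderiv ℝ f θ' y)
      (fderiv ℝ (fun θ' => fderiv ℝ f θ' y) θ) (θ + (0:ℝ) • y) := by
    simpa using hg.hasFDerivAt
  have hd2 : HasDerivAt (fun t : ℝ => fderiv ℝ f (θ + t • y) y)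
      (fderiv ℝ (fun θ' => fderiv ℝ f θ' y) θ y) 0 :=
    hg'.comp_hasDerivAt (f := fun s : ℝ => θ + s • y) (0:ℝ) (hline 0)
  have hcoord : ∀ (t : ℝ) (a : Fin K),
      (∑ j, X a j * (θ + t • y) j) = (∑ j, X a j * θ j) + t * ∑ j, X a j * y j := by
    intro t a
    simp only [PiLp.add_apply, PiLp.smul_apply, smul_eq_mul]
    rw [Finset.mul_sum, ← Finset.sum_add_distrib]
    exact Finset.sum_congr rfl fun j _ => by ring
  have hφeq : (fun s : ℝ => f (θ + s • y)) = fun t =>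
      (∑ a, r a * Real.exp ((∑ j, X a j * θ j) + t * ∑ j, X a j * y j))
        / (∑ a, Real.exp ((∑ j, X a j * θ j) + t * ∑ j, X a j * y j)) := by
    funext t
    rw [hfbody]
    simp only [hcoord t]
    rw [Finset.sum_div]
    exact Finset.sum_congr rfl fun a _ => by ring
  have hphi2 : ∀ t : ℝ, HasDerivAt (fun t : ℝ =>
      (∑ a, r a * Real.exp ((∑ j, X a j * θ j) + t * ∑ j, X a j * y j))
        / (∑ a, Real.exp ((∑ j, X a j * θ j) + t * ∑ j, X a j * y j)))
      (fderiv ℝ f (θ + t • y) y) t := fun t =>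
    (hphi t).congr_of_eventuallyEq (Filter.Eventually.of_forall fun s => (congrFun hφeq s).symm)
  have hderiv2' : deriv (fun t : ℝ =>
      (∑ a, r a * Real.exp ((∑ j, X a j * θ j) + t * ∑ j, X a j * y j))
        / (∑ a, Real.exp ((∑ j, X a j * θ j) + t * ∑ j, X a j * y j)))
      = fun t => fderiv ℝ f (θ + t • y) y := funext fun t => (hphi2 t).deriv
  have hD := NUS.deriv2 hK (fun a => ∑ j, X a j * θ j) (fun a => ∑ j, X a j * y j) r
  have e3 : fderiv ℝ (fderiv ℝ f) θ y y = deriv (deriv (fun t : ℝ =>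
      (∑ a, r a * Real.exp ((∑ j, X a j * θ j) + t * ∑ j, X a j * y j))
        / (∑ a, Real.exp ((∑ j, X a j * θ j) + t * ∑ j, X a j * y j)))) 0 := by
    rw [← hA, ← hd2.deriv]
    exact (congrArg (fun g => deriv g 0) hderiv2').symm
  have e4 : fderiv ℝ (fderiv ℝ f) θ y y
      = (∑ a, (Real.exp ((∑ j, X a j * θ j)) / ∑ b, Real.exp ((∑ j, X b j * θ j))) *
            (r a - ∑ b, (Real.exp ((∑ j, X b j * θ j)) / ∑ b', Real.exp ((∑ j, X b' j * θ j))) * r b) * (∑ j, X a j * y j) ^ 2)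
        - 2 * (∑ a, (Real.exp ((∑ j, X a j * θ j)) / ∑ b, Real.exp ((∑ j, X b j * θ j))) * (∑ j, X a j * y j))
            * (∑ a, (Real.exp ((∑ j, X a j * θ j)) / ∑ b, Real.exp ((∑ j, X b j * θ j))) *
                (r a - ∑ b, (Real.exp ((∑ j, X b j * θ j)) / ∑ b', Real.exp ((∑ j, X b' j * θ j))) * r b) * (∑ j, X a j * y j)) :=
    e3.trans hD
  rw [e4]
  have hp0 : ∀ a, 0 ≤ pz a := fun a => by
    rw [hpz]
    exact div_nonneg (Real.exp_pos _).le (Finset.sum_nonneg fun b _ => (Real.exp_pos _).le)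
  have hp1 : (∑ a, pz a) = 1 := by
    rw [hpz, ← Finset.sum_div, div_self (hNpos θ).ne']
  have hkey := NUS.key pz (fun a => pz a * (r a - ∑ b, pz b * r b))
    (fun a => ∑ j, X a j * y j) hp0 hp1
  simp only [hpz] at hkey
  refine le_trans hkey ?_
  have h9 : (0:ℝ) ≤ 3 * Real.sqrt (∑ a,
      (Real.exp (∑ j, X a j * θ j) / (∑ b, Real.exp (∑ j, X b j * θ j)) *
        (r a - ∑ b, Real.exp (∑ j, X b j * θ j) / (∑ b', Real.exp (∑ j, X b' j * θ j)) * r b)) ^ 2) := by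
    positivity
  have h10 := mul_le_mul_of_nonneg_left (NUS.rayleigh X y) h9
  nlinarith [h10]
end

section
/- Suppose the rewards r(1) > r(2) > ⋯ > r(K) are distinct with |r(a)| ≤ R_max, K ≥ 2, there exists w ∈ ℝ^d such that r′ = Xw preserves the ordering of r, and r is not a constant vector. Then the expected-reward objective has no stationary point at any finite parameter: for every θ ∈ ℝ^d, X^⊤ (diag(π_θ) − π_θ π_θ^⊤) r ≠ 0. -/
open scoped BigOperators

/-- Log-linear (softmax) policy `π_θ = softmax(Xθ)`. -/
noncomputable def policy {K d : ℕ} (X : Matrix (Fin K) (Fin d) ℝ) (θ : Fin d → ℝ) (a : Fin K) : ℝ :=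
  Real.exp (∑ j, X a j * θ j) / ∑ b, Real.exp (∑ j, X b j * θ j)

/-- Policy gradient `X^⊤ (diag(π_θ) − π_θ π_θ^⊤) r`. -/
noncomputable def pgrad {K d : ℕ} (X : Matrix (Fin K) (Fin d) ℝ) (r : Fin K → ℝ)
    (θ : Fin d → ℝ) : Fin d → ℝ :=
  fun j => ∑ a, X a j * (policy X θ a * (r a - ∑ b, policy X θ b * r b))

/-- If the rewards are strictly decreasing, bounded, some `Xw` preserves their ordering,
and `r` is non-constant, then the expected-reward objective has no stationary point at any
finite parameter. -/
theorem no_finite_stationary_point {K d : ℕ} (hK : 2 ≤ K)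
    (X : Matrix (Fin K) (Fin d) ℝ) (r : Fin K → ℝ)
    (Rmax : ℝ) (hr : ∀ a, |r a| ≤ Rmax)
    (hord : ∀ i j : Fin K, i < j → r j < r i)
    (hw : ∃ w : Fin d → ℝ, ∀ i j : Fin K,
      ((∑ k, X j k * w k) < ∑ k, X i k * w k ↔ r j < r i))
    (hnc : ¬ ∃ c : ℝ, ∀ a, r a = c) :
    ∀ θ : Fin d → ℝ, pgrad X r θ ≠ 0 := by
  intro θ hgrad
  obtain ⟨w, hwpres⟩ := hw
  set p : Fin K → ℝ := policy X θ with hp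
  set s : Fin K → ℝ := fun a => ∑ k, X a k * w k with hs
  have hKpos : 0 < K := lt_of_lt_of_le (by norm_num) hK
  -- positivity of policy
  have hden : 0 < ∑ b, Real.exp (∑ j, X b j * θ j) :=
    Finset.sum_pos (fun b _ => Real.exp_pos _) ⟨⟨0, hKpos⟩, Finset.mem_univ _⟩
  have hppos : ∀ a, 0 < p a := fun a => div_pos (Real.exp_pos _) hden
  have hpsum : ∑ a, p a = 1 := by
    simp only [hp, policy, ← Finset.sum_div]
    exact div_self (ne_of_gt hden)
  set rbar : ℝ := ∑ b, p b * r b with hrbar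
  -- the key scalar S = ⟨w, pgrad⟩
  set S : ℝ := ∑ a, s a * (p a * (r a - rbar)) with hS
  have hS0 : S = 0 := by
    have h1 : ∀ j, pgrad X r θ j = 0 := fun j => congrFun hgrad j
    have h2 : ∑ j, w j * pgrad X r θ j = 0 := by
      simp [h1]
    rw [show ∑ j, w j * pgrad X r θ j
        = ∑ j, ∑ a, w j * (X a j * (p a * (r a - rbar))) by
          refine Finset.sum_congr rfl fun j _ => ?_
          rw [pgrad, Finset.mul_sum]] at h2
    rw [Finset.sum_comm] at h2
    rw [hS]
    rw [← h2]
    refine Finset.sum_congr rfl fun a _ => ?_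
    rw [hs, Finset.sum_mul]
    refine Finset.sum_congr rfl fun k _ => ?_
    ring
  -- covariance identity: 2*S = double sum
  have hcov : 2 * S = ∑ a, ∑ b, p a * p b * ((s a - s b) * (r a - r b)) := by
    have expand : ∀ a b : Fin K, p a * p b * ((s a - s b) * (r a - r b))
        = (p a * (s a * r a)) * p b - (p a * s a) * (p b * r b)
          - (p a * r a) * (p b * s b) + p a * (p b * (s b * r b)) := by
      intros; ring
    simp only [expand]
    rw [show (∑ a, ∑ b, ((p a * (s a * r a)) * p b - (p a * s a) * (p b * r b)
          - (p a * r a) * (p b * s b) + p a * (p b * (s b * r b))))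
        = (∑ a, p a * (s a * r a)) * (∑ b, p b)
          - (∑ a, p a * s a) * (∑ b, p b * r b)
          - (∑ a, p a * r a) * (∑ b, p b * s b)
          + (∑ a, p a) * (∑ b, p b * (s b * r b)) by
        simp only [Finset.sum_sub_distrib, Finset.sum_add_distrib,
          ← Finset.sum_mul, ← Finset.mul_sum]]
    rw [hpsum]
    have hS' : S = (∑ a, p a * (s a * r a)) - (∑ a, p a * s a) * rbar := by
      have e : ∀ a : Fin K, s a * (p a * (r a - rbar))
          = p a * (s a * r a) - p a * s a * rbar := fun a => by ring
      rw [hS]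
      simp only [e, Finset.sum_sub_distrib, ← Finset.sum_mul]
    rw [hS', hrbar]
    ring
  -- each term nonneg
  have hterm : ∀ a b : Fin K, 0 ≤ p a * p b * ((s a - s b) * (r a - r b)) := by
    intro a b
    apply mul_nonneg (mul_nonneg (hppos a).le (hppos b).le)
    rcases lt_trichotomy (r a) (r b) with h | h | h
    · have hsab : s a < s b := (hwpres b a).mpr h
      have := mul_pos (sub_pos.mpr hsab) (sub_pos.mpr h)
      nlinarith
    · have h1 : ¬ s a < s b := fun hc => absurd ((hwpres b a).mp hc) (by rw [h]; exact lt_irrefl _)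
      have h2 : ¬ s b < s a := fun hc => absurd ((hwpres a b).mp hc) (by rw [h]; exact lt_irrefl _)
      have : s a = s b := le_antisymm (not_lt.mp h2) (not_lt.mp h1)
      rw [this, h]; simp
    · have hsab : s b < s a := (hwpres a b).mpr h
      exact mul_nonneg (sub_nonneg.mpr hsab.le) (sub_nonneg.mpr h.le)
  -- one strictly positive term
  have i0 : Fin K := ⟨0, hKpos⟩
  have i1 : Fin K := ⟨1, hK⟩
  have hlt : (⟨0, hKpos⟩ : Fin K) < ⟨1, hK⟩ := by simp [Fin.lt_def]
  have hr01 : r ⟨1, hK⟩ < r ⟨0, hKpos⟩ := hord _ _ hlt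
  have hs01 : s ⟨1, hK⟩ < s ⟨0, hKpos⟩ := (hwpres _ _).mpr hr01
  have hpos : 0 < ∑ a, ∑ b, p a * p b * ((s a - s b) * (r a - r b)) := by
    have houter : ∀ a : Fin K, 0 ≤ ∑ b, p a * p b * ((s a - s b) * (r a - r b)) :=
      fun a => Finset.sum_nonneg fun b _ => hterm a b
    refine Finset.sum_pos' (fun a _ => houter a) ⟨⟨0, hKpos⟩, Finset.mem_univ _, ?_⟩
    refine Finset.sum_pos' (fun b _ => hterm _ b) ⟨⟨1, hK⟩, Finset.mem_univ _, ?_⟩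
    have := mul_pos (sub_pos.mpr hs01) (sub_pos.mpr hr01)
    exact mul_pos (mul_pos (hppos _) (hppos _)) this
  rw [← hcov, hS0] at hpos
  norm_num at hpos
end
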